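/- Let n ≥ 2, q ≥ 1, and let β₀, β₁, …, β_{n−2} be real numbers. Let G = Σ_{k=0}^{n−2} β_k (F ⊗ E_k^{(n−2)}) and let Γ′ be the (C(n,2)·q^{n−1}) × q^n matrix obtained by stacking the matrices G_{a,b} over all pairs 1 ≤ a < b ≤ n. Then ‖Γ′‖² ≤ n² · max_{0 ≤ k ≤ n−2} β_k². -/

import Mathlib

noncomputable section

namespace ED

/-- The `q × q` matrix all of whose entries are `1/q`. -/
def E0 (q : ℕ) : Matrix (Fin q) (Fin q) ℝ := Matrix.of fun _ _ => 1 / q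

/-- `E₁ = I - E₀`. -/
def E1 (q : ℕ) : Matrix (Fin q) (Fin q) ℝ :=
  Matrix.of fun x y => (if x = y then 1 else 0) - 1 / q

/-- The projector `E_k^{(m)}` of the Hamming association scheme. -/
def Ek (q m k : ℕ) : Matrix (Fin m → Fin q) (Fin m → Fin q) ℝ :=
  Matrix.of fun x y => ∑ S ∈ Finset.powersetCard k (Finset.univ : Finset (Fin m)),
    ∏ i, (if i ∈ S then E1 q (x i) (y i) else E0 q (x i) (y i))

/-- The `q × q²` matrix with all entries `q^{-3/2}`. -/
def F0 (q : ℕ) : Matrix (Fin q) (Fin q × Fin q) ℝ :=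
  Matrix.of fun _ _ => ((q : ℝ) * Real.sqrt q)⁻¹

/-- The `q × q²` matrix with entries `q^{-1/2}((E₁)_{x,y₁} + (E₁)_{x,y₂})`. -/
def F1 (q : ℕ) : Matrix (Fin q) (Fin q × Fin q) ℝ :=
  Matrix.of fun x y => (Real.sqrt q)⁻¹ * (E1 q x y.1 + E1 q x y.2)

/-- `F = F₀ + F₁`. -/
def FF (q : ℕ) : Matrix (Fin q) (Fin q × Fin q) ℝ := F0 q + F1 q

/-- The increasing enumeration of `[n] \ {a,b}`. -/
def embCompl {n : ℕ} (a b : Fin n) (h : a ≠ b) : Fin (n - 2) → Fin n :=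
  fun i => (({a, b}ᶜ : Finset (Fin n)).orderIsoOfFin
    (by rw [Finset.card_compl, Finset.card_pair h, Fintype.card_fin]) i : Fin n)

/-- For a `q^{n-1} × q^n` matrix `G` (rows indexed by `[q] × [q]^{n-2}`, columns by
`([q] × [q]) × [q]^{n-2}`), the matrix `G_{a,b}` with rows indexed by strings
`x ∈ [q]^n` with `x a = x b`, and columns by `[q]^n`. -/
def subMat {n q : ℕ}
    (G : Matrix (Fin q × (Fin (n - 2) → Fin q)) ((Fin q × Fin q) × (Fin (n - 2) → Fin q)) ℝ)
    (a b : Fin n) (h : a ≠ b) :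
    Matrix {x : Fin n → Fin q // x a = x b} (Fin n → Fin q) ℝ :=
  Matrix.of fun x y =>
    G (x.1 a, fun i => x.1 (embCompl a b h i)) ((y a, y b), fun i => y (embCompl a b h i))

/-- The spectral norm (largest singular value) of a real matrix. -/
def specNorm {m n : Type*} [Fintype m] [Fintype n] [DecidableEq n] (A : Matrix m n ℝ) : ℝ :=
  ‖LinearMap.toContinuousLinearMap (Matrix.toEuclideanLin A)‖

end ED

namespace ED

/-- The tensor product `A ⊗ E_k^{(n-2)}` of a `q × q²` matrix `A` with `E_k^{(n-2)}`:
a `q^{n-1} × q^n` matrix with rows indexed by `[q] × [q]^{n-2}` and columns by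
`([q] × [q]) × [q]^{n-2}`. -/
def tens (n q : ℕ) (A : Matrix (Fin q) (Fin q × Fin q) ℝ) (k : ℕ) :
    Matrix (Fin q × (Fin (n - 2) → Fin q)) ((Fin q × Fin q) × (Fin (n - 2) → Fin q)) ℝ :=
  Matrix.of fun r c => A r.1 c.1 * Ek q (n - 2) k r.2 c.2

end ED

namespace ED

/-- The matrix `Γ′` obtained by stacking the matrices `G_{a,b}` over all pairs `a < b`. -/
def stacked {n q : ℕ}
    (G : Matrix (Fin q × (Fin (n - 2) → Fin q)) ((Fin q × Fin q) × (Fin (n - 2) → Fin q)) ℝ) :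
    Matrix ((p : {p : Fin n × Fin n // p.1 < p.2}) ×
      {x : Fin n → Fin q // x p.1.1 = x p.1.2}) (Fin n → Fin q) ℝ :=
  Matrix.of fun r y => subMat G r.1.1.1 r.1.1.2 (ne_of_lt r.1.2) r.2 y

end ED

/-! Since `F Fᵀ = E₀ + 2E₁` and the `E_k = E_k^{(n-2)}` are symmetric idempotents with
`E_j E_k = 0` for `j ≠ k` and `Σ_k E_k = I`, one gets
`G Gᵀ = Σ_k β_k² (E₀ ⊗ E_k + 2 E₁ ⊗ E_k)`, a combination of the orthogonal projections
`E_b ⊗ E_k` (which sum to `I`) with coefficients at most `2 max_k β_k²`; hence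
`‖G‖² = ‖Gᵀ‖² ≤ 2 max_k β_k²`. Each `G_{a,b}` is `G` with its rows restricted along an injection
and its columns permuted, so `‖G_{a,b}‖ ≤ ‖G‖`, and stacking the `C(n,2) ≤ n²/2` blocks gives
`‖Γ′‖² ≤ Σ_{a<b} ‖G_{a,b}‖² ≤ n² max_k β_k²`. -/

open Matrix Finset
open scoped Kronecker

namespace ED

section Projectors

variable {q : ℕ}

lemma E1_eq_one_sub_E0 : E1 q = 1 - E0 q := by
  ext x y
  simp [E0, E1, one_apply]

lemma E0_add_E1 : E0 q + E1 q = 1 := by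
  rw [E1_eq_one_sub_E0, add_sub_cancel]

lemma transpose_E0 : (E0 q)ᵀ = E0 q := rfl

lemma transpose_E1 : (E1 q)ᵀ = E1 q := by
  rw [E1_eq_one_sub_E0, transpose_sub, transpose_one, transpose_E0]

lemma isIdempotentElem_E0 : IsIdempotentElem (E0 q) := by
  ext x y
  simp only [E0, one_div, mul_apply, of_apply, sum_const, card_univ, Fintype.card_fin,
    nsmul_eq_mul]
  field_simp

lemma isIdempotentElem_E1 : IsIdempotentElem (E1 q) :=
  E1_eq_one_sub_E0 (q := q) ▸ isIdempotentElem_E0.one_sub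

lemma E0_mul_E1 : E0 q * E1 q = 0 := by
  rw [E1_eq_one_sub_E0]
  exact isIdempotentElem_E0.mul_one_sub_self

lemma E1_mul_E0 : E1 q * E0 q = 0 := by
  rw [E1_eq_one_sub_E0]
  exact isIdempotentElem_E0.one_sub_mul_self

lemma sum_E1_row (x : Fin q) : ∑ y, E1 q x y = 0 := by
  have hq : (q : ℝ) ≠ 0 := Nat.cast_ne_zero.mpr (Fin.pos x).ne'
  simp only [E1, of_apply, sum_sub_distrib, sum_ite_eq, mem_univ, if_true, sum_const, card_univ,
    Fintype.card_fin, nsmul_eq_mul]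
  field_simp
  ring

lemma sum_E1_mul_E1 (x x' : Fin q) : ∑ y, E1 q x y * E1 q x' y = E1 q x x' := by
  calc _ = (E1 q * (E1 q)ᵀ) x x' := by simp only [mul_apply, transpose_apply]
    _ = _ := by rw [transpose_E1, isIdempotentElem_E1.eq]

end Projectors

lemma sum_sum_affine_mul_affine {ι : Type*} [Fintype ι] (t s : ℝ) {a b : ι → ℝ}
    (ha : ∑ i, a i = 0) (hb : ∑ i, b i = 0) :
    ∑ i, ∑ j, (t + s * (a i + a j)) * (t + s * (b i + b j)) =
      Fintype.card ι ^ 2 * t ^ 2 + 2 * Fintype.card ι * s ^ 2 * ∑ i, a i * b i := by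
  have expand : ∀ i j, (t + s * (a i + a j)) * (t + s * (b i + b j)) =
      t ^ 2 + t * s * (a i + b i) + t * s * (a j + b j) + s ^ 2 * (a i * b i) +
        s ^ 2 * (a j * b j) + s ^ 2 * a i * b j + s ^ 2 * a j * b i := by
    intro i j
    ring
  simp only [expand, sum_add_distrib, ← mul_sum, ← sum_mul, ha, hb, sum_const, card_univ,
    nsmul_eq_mul, add_zero, mul_zero, zero_mul]
  simp only [mul_left_comm (a _), ← mul_sum]
  ring

lemma FF_mul_transpose_FF {q : ℕ} : FF q * (FF q)ᵀ = E0 q + 2 • E1 q := by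
  ext x x'
  have hq : (q : ℝ) ≠ 0 := Nat.cast_ne_zero.mpr (Fin.pos x).ne'
  simp only [FF, F0, F1, mul_apply, transpose_apply, Matrix.add_apply, of_apply,
    Fintype.sum_prod_type]
  rw [sum_sum_affine_mul_affine _ _ (sum_E1_row x) (sum_E1_row x'), sum_E1_mul_E1]
  simp only [E0, Fintype.card_fin, of_apply, Matrix.smul_apply, nsmul_eq_mul, mul_inv, inv_pow]
  field_simp
  rw [Real.sq_sqrt q.cast_nonneg]
  ring

section PiKronecker

variable {ι α R : Type*} [Fintype ι] [CommSemiring R]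

def piKronecker (A : ι → Matrix α α R) : Matrix (ι → α) (ι → α) R :=
  of fun x y => ∏ i, A i (x i) (y i)

lemma transpose_piKronecker (A : ι → Matrix α α R) :
    (piKronecker A)ᵀ = piKronecker fun i => (A i)ᵀ := rfl

lemma piKronecker_mul_piKronecker [DecidableEq ι] [Fintype α] (A B : ι → Matrix α α R) :
    piKronecker A * piKronecker B = piKronecker fun i => A i * B i := by
  ext x y
  simp only [piKronecker, mul_apply, of_apply, ← prod_mul_distrib]
  rw [prod_univ_sum, Fintype.piFinset_univ]

lemma piKronecker_eq_zero {A : ι → Matrix α α R} (i : ι) (hi : A i = 0) :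
    piKronecker A = 0 := by
  ext x y
  exact prod_eq_zero (mem_univ i) (by simp [hi])

lemma piKronecker_one [DecidableEq α] : piKronecker (fun _ : ι => (1 : Matrix α α R)) = 1 := by
  ext x y
  simp [piKronecker, one_apply, prod_boole, funext_iff]

lemma sum_piKronecker_ite [DecidableEq ι] (A B : ι → Matrix α α R) :
    ∑ S : Finset ι, piKronecker (fun i => if i ∈ S then A i else B i) =
      piKronecker fun i => A i + B i := by
  ext x y
  simp only [piKronecker, Matrix.sum_apply, of_apply, Matrix.add_apply, Fintype.prod_add]
  refine sum_congr rfl fun S _ => ?_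
  rw [← prod_mul_prod_compl S]
  congr 1
  · exact prod_congr rfl fun i hi => by simp [hi]
  · exact prod_congr rfl fun i hi => by simp [mem_compl.mp hi]

end PiKronecker

section HammingProjectors

variable {q m : ℕ}

def ESet (q : ℕ) (S : Finset (Fin m)) : Matrix (Fin m → Fin q) (Fin m → Fin q) ℝ :=
  piKronecker fun i => if i ∈ S then E1 q else E0 q

lemma Ek_eq_sum_ESet (k : ℕ) : Ek q m k = ∑ S ∈ powersetCard k univ, ESet q S := by
  ext x y
  simp only [Ek, ESet, piKronecker, Matrix.sum_apply, of_apply]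
  refine sum_congr rfl fun S _ => prod_congr rfl fun i _ => ?_
  split_ifs <;> rfl

lemma transpose_ESet (S : Finset (Fin m)) : (ESet q S)ᵀ = ESet q S := by
  simp only [ESet, transpose_piKronecker, apply_ite, transpose_E0, transpose_E1]

lemma ESet_mul_ESet (S T : Finset (Fin m)) :
    ESet q S * ESet q T = if S = T then ESet q S else 0 := by
  rw [ESet, ESet, piKronecker_mul_piKronecker]
  split_ifs with hST
  · subst hST
    congr! 2 with i
    split_ifs
    exacts [isIdempotentElem_E1.eq, isIdempotentElem_E0.eq]
  · obtain ⟨i, hi⟩ : ∃ i, ¬(i ∈ S ↔ i ∈ T) := by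
      by_contra! h
      exact hST (Finset.ext h)
    refine piKronecker_eq_zero i ?_
    by_cases hS : i ∈ S <;> simp_all [E0_mul_E1, E1_mul_E0]

lemma sum_ESet : ∑ S, ESet q S = (1 : Matrix (Fin m → Fin q) (Fin m → Fin q) ℝ) := by
  simp only [ESet, sum_piKronecker_ite, add_comm (E1 q), E0_add_E1]
  exact piKronecker_one

lemma Ek_mul_Ek (k j : ℕ) : Ek q m k * Ek q m j = if k = j then Ek q m k else 0 := by
  simp only [Ek_eq_sum_ESet, sum_mul_sum, ESet_mul_ESet]
  split_ifs with hkj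
  · subst hkj
    exact sum_congr rfl fun S hS => by rw [sum_ite_eq, if_pos hS]
  · refine sum_eq_zero fun S hS => sum_eq_zero fun T hT => if_neg ?_
    rintro rfl
    exact hkj ((mem_powersetCard.mp hS).2.symm.trans (mem_powersetCard.mp hT).2)

lemma transpose_Ek (k : ℕ) : (Ek q m k)ᵀ = Ek q m k := by
  simp only [Ek_eq_sum_ESet, transpose_sum, transpose_ESet]

lemma sum_Ek : ∑ k ∈ range (m + 1), Ek q m k = 1 := by
  have h := sum_powerset (univ : Finset (Fin m)) (ESet q)
  rw [powerset_univ, sum_ESet, card_fin] at h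
  simpa only [Ek_eq_sum_ESet] using h.symm

end HammingProjectors

section QuadraticForm

variable {κ : Type*} [Fintype κ]

lemma dotProduct_mulVec_nonneg_of_isIdempotentElem {P : Matrix κ κ ℝ} (hsymm : Pᵀ = P)
    (hidem : IsIdempotentElem P) (u : κ → ℝ) : 0 ≤ u ⬝ᵥ P *ᵥ u := by
  have h : u ⬝ᵥ P *ᵥ u = (P *ᵥ u) ⬝ᵥ (P *ᵥ u) := by
    conv_lhs => rw [← hidem.eq, ← mulVec_mulVec, dotProduct_mulVec, ← mulVec_transpose, hsymm]
  rw [h]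
  exact sum_nonneg fun i _ => mul_self_nonneg _

lemma dotProduct_sum_smul_mulVec_le [DecidableEq κ] {ι : Type*} {s : Finset ι}
    {P : ι → Matrix κ κ ℝ} (hsymm : ∀ i ∈ s, (P i)ᵀ = P i)
    (hidem : ∀ i ∈ s, IsIdempotentElem (P i)) (hsum : ∑ i ∈ s, P i = 1) {c : ι → ℝ} {C : ℝ}
    (hc : ∀ i ∈ s, c i ≤ C) (u : κ → ℝ) :
    u ⬝ᵥ (∑ i ∈ s, c i • P i) *ᵥ u ≤ C * (u ⬝ᵥ u) := by
  have hlin : ∀ Q : ι → Matrix κ κ ℝ, u ⬝ᵥ (∑ i ∈ s, Q i) *ᵥ u = ∑ i ∈ s, u ⬝ᵥ Q i *ᵥ u :=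
    fun Q => by simp only [sum_mulVec, dotProduct_sum]
  calc u ⬝ᵥ (∑ i ∈ s, c i • P i) *ᵥ u = ∑ i ∈ s, c i * (u ⬝ᵥ P i *ᵥ u) := by
        simp only [hlin, smul_mulVec, dotProduct_smul, smul_eq_mul]
    _ ≤ ∑ i ∈ s, C * (u ⬝ᵥ P i *ᵥ u) := sum_le_sum fun i hi =>
        mul_le_mul_of_nonneg_right (hc i hi)
          (dotProduct_mulVec_nonneg_of_isIdempotentElem (hsymm i hi) (hidem i hi) u)
    _ = C * (u ⬝ᵥ u) := by rw [← mul_sum, ← hlin, hsum, one_mulVec]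

end QuadraticForm

lemma kronecker_sum {ι l m n p R : Type*} [CommSemiring R] (A : Matrix l m R) (s : Finset ι)
    (B : ι → Matrix n p R) : A ⊗ₖ (∑ i ∈ s, B i) = ∑ i ∈ s, A ⊗ₖ B i := by
  ext ⟨a, b⟩ ⟨c, d⟩
  simp only [kronecker_apply, Matrix.sum_apply, mul_sum]

lemma sum_smul_kronecker_mul_transpose {ι l m n R : Type*} [Fintype m] [Fintype n]
    [DecidableEq ι] [CommSemiring R] {s : Finset ι} (β : ι → R) (F : Matrix l m R)
    {E : ι → Matrix n n R} (hsymm : ∀ k ∈ s, (E k)ᵀ = E k)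
    (hmul : ∀ k ∈ s, ∀ j ∈ s, E k * E j = if k = j then E k else 0) :
    (∑ k ∈ s, β k • (F ⊗ₖ E k)) * (∑ k ∈ s, β k • (F ⊗ₖ E k))ᵀ =
      ∑ k ∈ s, β k ^ 2 • ((F * Fᵀ) ⊗ₖ E k) := by
  rw [transpose_sum, Matrix.sum_mul]
  refine sum_congr rfl fun k hk => ?_
  have hterm : ∀ j ∈ s, β k • (F ⊗ₖ E k) * (β j • (F ⊗ₖ E j))ᵀ =
      if k = j then β k ^ 2 • ((F * Fᵀ) ⊗ₖ E k) else 0 := fun j hj => by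
    rw [transpose_smul, ← kroneckerMap_transpose, hsymm j hj, Matrix.smul_mul, Matrix.mul_smul,
      smul_smul, ← mul_kronecker_mul, hmul k hk j hj]
    split_ifs with hkj
    · rw [hkj, sq]
    · rw [kronecker_zero, smul_zero]
  rw [Matrix.mul_sum, sum_congr rfl hterm, sum_ite_eq, if_pos hk]

lemma norm_toLp_sq {n : Type*} [Fintype n] (v : n → ℝ) :
    ‖(WithLp.toLp 2 v : EuclideanSpace ℝ n)‖ ^ 2 = v ⬝ᵥ v := by
  rw [← real_inner_self_eq_norm_sq, EuclideanSpace.inner_toLp_toLp, star_trivial]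

lemma dotProduct_comp_self_le {l m : Type*} [Fintype l] [Fintype m] {f : l → m}
    (hf : Function.Injective f) (w : m → ℝ) : (w ∘ f) ⬝ᵥ (w ∘ f) ≤ w ⬝ᵥ w := by
  classical
  simp only [dotProduct, Function.comp_apply]
  rw [← sum_image (f := fun r => w r * w r) fun x _ y _ h => hf h]
  exact sum_le_univ_sum_of_nonneg fun r => mul_self_nonneg _

section SpecNorm

variable {m n : Type*} [Fintype m] [Fintype n] [DecidableEq n]

lemma mulVec_dotProduct_mulVec_le (A : Matrix m n ℝ) (v : n → ℝ) :
    (A *ᵥ v) ⬝ᵥ (A *ᵥ v) ≤ specNorm A ^ 2 * (v ⬝ᵥ v) := by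
  rw [← norm_toLp_sq, ← norm_toLp_sq, ← mul_pow]
  gcongr
  exact (LinearMap.toContinuousLinearMap (toEuclideanLin A)).le_opNorm (WithLp.toLp 2 v)

lemma specNorm_sq_le_of_forall {A : Matrix m n ℝ} {c : ℝ} (hc : 0 ≤ c)
    (h : ∀ v, (A *ᵥ v) ⬝ᵥ (A *ᵥ v) ≤ c * (v ⬝ᵥ v)) : specNorm A ^ 2 ≤ c := by
  have hle : specNorm A ≤ √c := by
    refine ContinuousLinearMap.opNorm_le_bound _ (Real.sqrt_nonneg c) fun v => ?_
    rw [← pow_le_pow_iff_left₀ (norm_nonneg _) (by positivity) two_ne_zero, mul_pow,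
      Real.sq_sqrt hc]
    have hv := h (WithLp.ofLp v)
    rwa [← norm_toLp_sq, ← norm_toLp_sq, WithLp.toLp_ofLp] at hv
  calc specNorm A ^ 2 ≤ √c ^ 2 := pow_le_pow_left₀ (norm_nonneg _) hle 2
    _ = c := Real.sq_sqrt hc

-- `specNorm` is definitionally Mathlib's L2 operator norm on matrices.
open scoped Matrix.Norms.L2Operator in
lemma specNorm_transpose [DecidableEq m] (A : Matrix m n ℝ) : specNorm Aᵀ = specNorm A := by
  have h := l2_opNorm_conjTranspose A
  rw [conjTranspose_eq_transpose_of_trivial] at h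
  exact h

lemma specNorm_submatrix_le {l o : Type*} [Fintype l] [Fintype o] [DecidableEq o]
    (A : Matrix m n ℝ) {f : l → m} (hf : Function.Injective f) (e : o ≃ n) :
    specNorm (A.submatrix f e) ≤ specNorm A := by
  refine (pow_le_pow_iff_left₀ (norm_nonneg _) (norm_nonneg _) two_ne_zero).mp
    (specNorm_sq_le_of_forall (sq_nonneg _) fun v => ?_)
  rw [submatrix_mulVec_equiv]
  calc _ ≤ (A *ᵥ (v ∘ e.symm)) ⬝ᵥ (A *ᵥ (v ∘ e.symm)) := dotProduct_comp_self_le hf _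
    _ ≤ specNorm A ^ 2 * ((v ∘ e.symm) ⬝ᵥ (v ∘ e.symm)) := mulVec_dotProduct_mulVec_le A _
    _ = specNorm A ^ 2 * (v ⬝ᵥ v) := by
      rw [dotProduct_comp_equiv_symm, Function.comp_assoc, e.symm_comp_self, Function.comp_id]

lemma specNorm_sigma_sq_le_sum {ι : Type*} [Fintype ι] {κ : ι → Type*} [∀ i, Fintype (κ i)]
    (A : Matrix (Σ i, κ i) n ℝ) :
    specNorm A ^ 2 ≤ ∑ i, specNorm (A.submatrix (Sigma.mk i) id) ^ 2 := by
  refine specNorm_sq_le_of_forall (sum_nonneg fun i _ => sq_nonneg _) fun v => ?_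
  calc (A *ᵥ v) ⬝ᵥ (A *ᵥ v) = ∑ i, (A.submatrix (Sigma.mk i) id *ᵥ v) ⬝ᵥ
        (A.submatrix (Sigma.mk i) id *ᵥ v) := Fintype.sum_sigma _
    _ ≤ ∑ i, specNorm (A.submatrix (Sigma.mk i) id) ^ 2 * (v ⬝ᵥ v) :=
        sum_le_sum fun i _ => mulVec_dotProduct_mulVec_le _ v
    _ = _ := (sum_mul ..).symm

end SpecNorm

section Gram

variable {q m : ℕ}

def EKron (q m : ℕ) (p : Bool × ℕ) :
    Matrix (Fin q × (Fin m → Fin q)) (Fin q × (Fin m → Fin q)) ℝ :=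
  (if p.1 then E1 q else E0 q) ⊗ₖ Ek q m p.2

lemma transpose_EKron (p : Bool × ℕ) : (EKron q m p)ᵀ = EKron q m p := by
  rw [EKron, ← kroneckerMap_transpose, transpose_Ek, apply_ite transpose, transpose_E0,
    transpose_E1]

lemma isIdempotentElem_EKron (p : Bool × ℕ) : IsIdempotentElem (EKron q m p) := by
  rw [IsIdempotentElem, EKron, ← mul_kronecker_mul, Ek_mul_Ek, if_pos rfl]
  split_ifs
  exacts [congrArg (· ⊗ₖ _) isIdempotentElem_E1.eq, congrArg (· ⊗ₖ _) isIdempotentElem_E0.eq]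

lemma sum_EKron : ∑ p ∈ univ ×ˢ range (m + 1), EKron q m p = 1 := by
  rw [sum_product_right]
  simp only [EKron, Fintype.sum_bool, if_true, Bool.false_eq_true, if_false, ← add_kronecker,
    add_comm (E1 q), E0_add_E1, ← kronecker_sum, sum_Ek, one_kronecker_one]

lemma sum_smul_FF_kronecker_Ek_mul_transpose (β : ℕ → ℝ) :
    (∑ k ∈ range (m + 1), β k • (FF q ⊗ₖ Ek q m k)) *
        (∑ k ∈ range (m + 1), β k • (FF q ⊗ₖ Ek q m k))ᵀ =
      ∑ p ∈ univ ×ˢ range (m + 1), ((if p.1 then 2 else 1) * β p.2 ^ 2) • EKron q m p := by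
  rw [sum_smul_kronecker_mul_transpose β _ (fun k _ => transpose_Ek k)
      (fun k _ j _ => Ek_mul_Ek k j), FF_mul_transpose_FF, sum_product_right]
  refine sum_congr rfl fun k _ => ?_
  simp only [EKron, Fintype.sum_bool, if_true, Bool.false_eq_true, if_false, add_kronecker,
    smul_kronecker]
  module

lemma specNorm_sq_sum_smul_FF_kronecker_Ek_le (β : ℕ → ℝ) {B : ℝ}
    (hB : ∀ k ∈ range (m + 1), β k ^ 2 ≤ B) :
    specNorm (∑ k ∈ range (m + 1), β k • (FF q ⊗ₖ Ek q m k)) ^ 2 ≤ 2 * B := by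
  have hB0 : 0 ≤ B := (sq_nonneg _).trans (hB 0 (by simp))
  rw [← specNorm_transpose]
  refine specNorm_sq_le_of_forall (by positivity) fun u => ?_
  rw [dotProduct_mulVec, vecMul_transpose, mulVec_mulVec, dotProduct_comm,
    sum_smul_FF_kronecker_Ek_mul_transpose]
  refine dotProduct_sum_smul_mulVec_le (fun p _ => transpose_EKron p)
    (fun p _ => isIdempotentElem_EKron p) sum_EKron (fun p hp => ?_) u
  have hk := hB p.2 (mem_product.mp hp).2
  split_ifs <;> linarith

end Gram

section Restriction

variable {n q : ℕ} {a b : Fin n} (h : a ≠ b)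

lemma exists_embCompl_eq {j : Fin n} (hja : j ≠ a) (hjb : j ≠ b) :
    ∃ i, embCompl a b h i = j := by
  have hj : j ∈ ({a, b}ᶜ : Finset (Fin n)) := by simp [hja, hjb]
  refine ⟨(orderIsoOfFin _ (by rw [card_compl, card_pair h, Fintype.card_fin])).symm ⟨j, hj⟩, ?_⟩
  simp [embCompl]

include h in
lemma funext_embCompl {α : Type*} {y y' : Fin n → α} (ha : y a = y' a) (hb : y b = y' b)
    (hc : ∀ i, y (embCompl a b h i) = y' (embCompl a b h i)) : y = y' := by
  funext j
  by_cases hja : j = a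
  · rwa [hja]
  by_cases hjb : j = b
  · rwa [hjb]
  obtain ⟨i, rfl⟩ := exists_embCompl_eq h hja hjb
  exact hc i

def subMatColEquiv : (Fin n → Fin q) ≃ (Fin q × Fin q) × (Fin (n - 2) → Fin q) :=
  Equiv.ofBijective (fun y => ((y a, y b), fun i => y (embCompl a b h i))) <| by
    refine (Fintype.bijective_iff_injective_and_card _).mpr ⟨fun y y' hy => ?_, ?_⟩
    · simp only [Prod.mk.injEq, funext_iff] at hy
      exact funext_embCompl h hy.1.1 hy.1.2 hy.2
    · have : 2 ≤ n := by have := Fin.val_ne_of_ne h; omega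
      simp only [Fintype.card_prod, Fintype.card_fun, Fintype.card_fin, ← pow_two, ← pow_add]
      congr 1
      omega

lemma subMat_row_injective :
    Function.Injective fun x : {x : Fin n → Fin q // x a = x b} =>
      (x.1 a, fun i => x.1 (embCompl a b h i)) := by
  intro x x' hx
  simp only [Prod.mk.injEq, funext_iff] at hx
  exact Subtype.ext <| funext_embCompl h hx.1 (by rw [← x.2, ← x'.2, hx.1]) hx.2

lemma specNorm_subMat_le
    (G : Matrix (Fin q × (Fin (n - 2) → Fin q)) ((Fin q × Fin q) × (Fin (n - 2) → Fin q)) ℝ) :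
    specNorm (subMat G a b h) ≤ specNorm G :=
  specNorm_submatrix_le G (subMat_row_injective h) (subMatColEquiv h)

end Restriction

lemma specNorm_stacked_sq_le {n q : ℕ}
    (G : Matrix (Fin q × (Fin (n - 2) → Fin q)) ((Fin q × Fin q) × (Fin (n - 2) → Fin q)) ℝ) :
    specNorm (stacked G) ^ 2 ≤
      Fintype.card {p : Fin n × Fin n // p.1 < p.2} * specNorm G ^ 2 := by
  refine (specNorm_sigma_sq_le_sum _).trans ?_
  rw [← nsmul_eq_mul, ← card_univ]
  exact sum_le_card_nsmul _ _ _ fun p _ =>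
    pow_le_pow_left₀ (norm_nonneg _) (specNorm_subMat_le (ne_of_lt p.2) G) 2

lemma two_mul_card_lt_le_sq (n : ℕ) :
    2 * Fintype.card {p : Fin n × Fin n // p.1 < p.2} ≤ n ^ 2 := by
  rw [Fintype.card_subtype, Fintype.card_product_filter_lt, Fintype.card_fin,
    Nat.choose_two_right]
  calc 2 * (n * (n - 1) / 2) ≤ n * (n - 1) := Nat.mul_div_le _ _
    _ ≤ n ^ 2 := by
      rw [sq]
      exact Nat.mul_le_mul_left n (Nat.sub_le n 1)

end ED

open ED in
/-- For `G = Σ_k β_k (F ⊗ E_k^{(n−2)})` and `Γ′` the stacking of the `G_{a,b}`,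
one has `‖Γ′‖² ≤ n² · max_{0 ≤ k ≤ n−2} β_k²`. -/
theorem stmt10 (n q : ℕ) (hn : 2 ≤ n) (β : ℕ → ℝ)
    (Γ' : Matrix ((p : {p : Fin n × Fin n // p.1 < p.2}) ×
        {x : Fin n → Fin q // x p.1.1 = x p.1.2}) (Fin n → Fin q) ℝ)
    (hΓ' : Γ' = stacked (Matrix.of fun r c =>
        ∑ k ∈ Finset.range (n - 1), β k * (FF q r.1 c.1 * Ek q (n - 2) k r.2 c.2))) :
    specNorm Γ' ^ 2 ≤ (n : ℝ) ^ 2 *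
      (Finset.range (n - 1)).sup' (by simp; omega) (fun k => β k ^ 2) := by
  have hn1 : n - 1 = n - 2 + 1 := by omega
  set B := (Finset.range (n - 1)).sup' (by simp; omega) (fun k => β k ^ 2)
  set N := Fintype.card {p : Fin n × Fin n // p.1 < p.2}
  have hB : ∀ k ∈ Finset.range (n - 2 + 1), β k ^ 2 ≤ B := fun k hk =>
    Finset.le_sup' (fun k => β k ^ 2) (hn1 ▸ hk)
  have hB0 : 0 ≤ B := (sq_nonneg _).trans (hB 0 (by simp))
  have hG : (Matrix.of fun r c =>
      ∑ k ∈ Finset.range (n - 1), β k * (FF q r.1 c.1 * Ek q (n - 2) k r.2 c.2)) =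
      ∑ k ∈ Finset.range (n - 2 + 1), β k • (FF q ⊗ₖ Ek q (n - 2) k) := by
    ext r c
    simp [hn1, Matrix.sum_apply]
  have hN : (2 * N : ℝ) ≤ n ^ 2 := by exact_mod_cast two_mul_card_lt_le_sq n
  calc specNorm Γ' ^ 2
      ≤ N * specNorm (∑ k ∈ Finset.range (n - 2 + 1), β k • (FF q ⊗ₖ Ek q (n - 2) k)) ^ 2 := by
        rw [hΓ', hG]
        exact specNorm_stacked_sq_le _
    _ ≤ N * (2 * B) := by gcongr; exact specNorm_sq_sum_smul_FF_kronecker_Ek_le β hB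
    _ = 2 * N * B := by ring
    _ ≤ n ^ 2 * B := by gcongr
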